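/- Let X be a real Banach space, let A: X ⇉ X* be a maximally monotone linear relation, and let f: X → (−∞,+∞] be a proper lower semicontinuous convex function. If x belongs to the norm closure of dom A and x ∈ int dom ∂f, then F_{A+∂f}(x, x*) ≥ ⟨x, x*⟩ for every x* ∈ X*. -/

import Mathlib

open NormedSpace Set Pointwise

variable {X : Type*} [NormedAddCommGroup X] [NormedSpace ℝ X]

/-- The graph of a set-valued operator `A : X ⇉ X*`. -/
def gra (A : X → Set (StrongDual ℝ X)) : Set (X × StrongDual ℝ X) := {p | p.2 ∈ A p.1}

/-- The domain of a set-valued operator. -/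
def domOp (A : X → Set (StrongDual ℝ X)) : Set X := {x | (A x).Nonempty}

/-- `A` is a monotone operator. -/
def IsMonotoneOp (A : X → Set (StrongDual ℝ X)) : Prop :=
  ∀ p ∈ gra A, ∀ q ∈ gra A, 0 ≤ (p.2 - q.2) (p.1 - q.1)

/-- `A` is maximally monotone: it is monotone and has no proper monotone extension. -/
def IsMaxMonotoneOp (A : X → Set (StrongDual ℝ X)) : Prop :=
  IsMonotoneOp A ∧
    ∀ B : X → Set (StrongDual ℝ X), IsMonotoneOp B → gra A ⊆ gra B → gra B = gra A

/-- `A` is a linear relation: its graph is a linear subspace of `X × X*`. -/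
def IsLinearRelation (A : X → Set (StrongDual ℝ X)) : Prop :=
  ∃ S : Submodule ℝ (X × StrongDual ℝ X), (S : Set (X × StrongDual ℝ X)) = gra A

/-- The pointwise (Minkowski) sum of two set-valued operators. -/
def opSum (A B : X → Set (StrongDual ℝ X)) : X → Set (StrongDual ℝ X) := fun x => A x + B x

/-- Effective domain of an extended-real-valued function. -/
def fdom (f : X → EReal) : Set X := {x | f x ≠ ⊤}

/-- `f` is proper: not identically `+∞` and never `-∞`. -/
def EProper (f : X → EReal) : Prop := (∃ x, f x ≠ ⊤) ∧ ∀ x, f x ≠ ⊥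

/-- Convexity of an extended-real-valued function. -/
def EConvex (f : X → EReal) : Prop :=
  ∀ x y : X, ∀ t : ℝ, 0 ≤ t → t ≤ 1 →
    f (t • x + (1 - t) • y) ≤ (t : EReal) * f x + ((1 - t : ℝ) : EReal) * f y

/-- The subdifferential of `f`. -/
def subdiff (f : X → EReal) : X → Set (StrongDual ℝ X) :=
  fun x => {xs | ∀ y : X, ((xs (y - x) : ℝ) : EReal) + f x ≤ f y}

/-- The Fitzpatrick function of a set-valued operator. -/
noncomputable def fitz (A : X → Set (StrongDual ℝ X)) : X × StrongDual ℝ X → EReal :=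
  fun p => ⨆ q ∈ gra A, ((p.2 q.1 + q.2 p.1 - q.2 q.1 : ℝ) : EReal)

/-- `(x,x*)` is monotonically related to a set `G ⊆ X × X*`. -/
def MonRel (p : X × StrongDual ℝ X) (G : Set (X × StrongDual ℝ X)) : Prop :=
  ∀ q ∈ G, 0 ≤ (p.2 - q.2) (p.1 - q.1)

/-- A maximally monotone operator is of type (FPV). -/
def IsFPVOp (A : X → Set (StrongDual ℝ X)) : Prop :=
  IsMaxMonotoneOp A ∧
    ∀ U : Set X, IsOpen U → Convex ℝ U → (U ∩ domOp A).Nonempty →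
      ∀ p : X × StrongDual ℝ X, p.1 ∈ U →
        MonRel p (gra A ∩ U ×ˢ (univ : Set (StrongDual ℝ X))) → p ∈ gra A

/-- The normal cone operator of a set `C`. -/
def normalCone (C : Set X) : X → Set (StrongDual ℝ X) :=
  fun x => {xs | x ∈ C ∧ ∀ c ∈ C, xs (c - x) ≤ 0}

/-!
If `F_{A+∂f}(x, x*) < ⟨x, x*⟩`, there is `δ > 0` with `⟨a - x, a* + b*⟩ ≥ ⟨a - x, x*⟩ + δ` for all
`a* ∈ A a`, `b* ∈ ∂f(a)`. A lower semicontinuous convex function on a Banach space is continuous at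
interior points of its domain (Baire), so `⟨a - x, b*⟩ ≤ f(2a - x) - f(a) → 0` as `a → x`; hence
`⟨a - x, a*⟩ ≥ δ / 2` on `gra A` near `x`. This is impossible for a maximally monotone linear
relation with `x ∈ cl dom A`: then `(x, 0)` lies in the closure of the convex set
`{(a, t) | ∃ a* ∈ A a, ⟨a - x, a*⟩ ≤ t}`. Indeed, a functional `(w, s)` separating `(x, 0)` from it
has `s ≤ 0`; if `s < 0` then `(x, w / |s|)` is monotonically related to `gra A`, so lies in it by
maximality, and if `s = 0` then `w` is bounded above, hence zero, on the subspace `dom A`, so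
`w x = 0`.
-/

open Filter Topology

section Baire

variable {Y : Type*} [TopologicalSpace Y] [BaireSpace Y]

theorem LowerSemicontinuous.exists_eventually_le_of_ne_top {g : Y → EReal}
    (hg : LowerSemicontinuous g) {U : Set Y} (hU : IsOpen U) (hne : U.Nonempty)
    (hfin : ∀ y ∈ U, g y ≠ ⊤) : ∃ z ∈ U, ∃ M : ℝ, ∀ᶠ y in 𝓝 z, g y ≤ M := by
  have hclosed : ∀ n : ℕ, IsClosed ({y | g y ≤ (n : ℝ)} ∪ Uᶜ) := fun n =>
    (hg.isClosed_preimage _).union hU.isClosed_compl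
  have hcover : ⋃ n : ℕ, ({y | g y ≤ (n : ℝ)} ∪ Uᶜ) = univ := by
    refine eq_univ_of_forall fun y => ?_
    by_cases hy : y ∈ U
    · obtain ⟨n, hn⟩ := exists_nat_ge (g y).toReal
      exact mem_iUnion.2
        ⟨n, Or.inl ((EReal.le_coe_toReal (hfin y hy)).trans (by exact_mod_cast hn))⟩
    · exact mem_iUnion.2 ⟨0, Or.inr hy⟩
  obtain ⟨z, hzU, hz⟩ := (dense_iUnion_interior_of_closed hclosed hcover).inter_open_nonempty
    U hU hne
  obtain ⟨n, hn⟩ := mem_iUnion.1 hz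
  refine ⟨z, hzU, n, ?_⟩
  filter_upwards [mem_interior_iff_mem_nhds.1 hn, hU.mem_nhds hzU] with y hy hyU
  exact hy.resolve_right (not_not_intro hyU)

end Baire

section ConvexFunction

variable {f : X → EReal}

theorem EConvex.convexOn_toReal (hbot : ∀ y, f y ≠ ⊥) (hconv : EConvex f) {s : Set X}
    (hs : Convex ℝ s) (hfin : ∀ y ∈ s, f y ≠ ⊤) : ConvexOn ℝ s fun y => (f y).toReal := by
  refine ⟨hs, fun a ha b hb t t' ht ht' htt' => ?_⟩
  obtain rfl : t' = 1 - t := by linarith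
  have h := hconv a b t ht (by linarith)
  rw [← EReal.coe_toReal (hfin a ha) (hbot a), ← EReal.coe_toReal (hfin b hb) (hbot b),
    ← EReal.coe_toReal (hfin _ (hs ha hb ht ht' htt')) (hbot _), ← EReal.coe_mul,
    ← EReal.coe_mul, ← EReal.coe_add, EReal.coe_le_coe_iff] at h
  simpa only [smul_eq_mul] using h

theorem continuousAt_toReal_of_mem_interior_fdom [CompleteSpace X] (hbot : ∀ y, f y ≠ ⊥)
    (hconv : EConvex f) (hlsc : LowerSemicontinuous f) {x : X} (hx : x ∈ interior (fdom f)) :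
    ContinuousAt (fun y => (f y).toReal) x := by
  obtain ⟨r, hr, hball⟩ := Metric.mem_nhds_iff.1 (mem_interior_iff_mem_nhds.1 hx)
  have hfin : ∀ y ∈ Metric.ball x r, f y ≠ ⊤ := fun y hy => hball hy
  have hx_mem : x ∈ Metric.ball x r := Metric.mem_ball_self hr
  obtain ⟨z, hz, M, hM⟩ := hlsc.exists_eventually_le_of_ne_top Metric.isOpen_ball ⟨x, hx_mem⟩ hfin
  have hbdd : (𝓝 z).IsBoundedUnder (· ≤ ·) fun y => (f y).toReal :=
    isBoundedUnder_of_eventually_le (a := M) <| by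
      filter_upwards [hM] with y hy
      simpa using EReal.toReal_le_toReal hy (hbot y) (EReal.coe_ne_top M)
  have hconvOn := hconv.convexOn_toReal hbot (convex_ball x r) hfin
  have hcont : ContinuousOn (fun y => (f y).toReal) (Metric.ball x r) := by
    refine ((hconvOn.continuousOn_tfae Metric.isOpen_ball ⟨x, hx_mem⟩).out 3 1).mp ?_
    exact ⟨z, hz, hbdd⟩
  exact hcont.continuousAt (Metric.ball_mem_nhds x hr)

theorem ne_top_of_mem_subdiff {a y : X} {bs : StrongDual ℝ X} (hbs : bs ∈ subdiff f a)
    (hy : f y ≠ ⊤) : f a ≠ ⊤ := by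
  intro ha
  have h := hbs y
  rw [ha, EReal.add_top_of_ne_bot (EReal.coe_ne_bot _)] at h
  exact hy (top_le_iff.1 h)

theorem domOp_subdiff_subset_fdom (hf : ∃ y, f y ≠ ⊤) : domOp (subdiff f) ⊆ fdom f :=
  fun _ ⟨_, hbs⟩ => ne_top_of_mem_subdiff hbs hf.choose_spec

theorem subdiff_apply_sub_le (hbot : ∀ y, f y ≠ ⊥) {a y : X} {bs : StrongDual ℝ X}
    (hbs : bs ∈ subdiff f a) (hy : f y ≠ ⊤) : bs (y - a) ≤ (f y).toReal - (f a).toReal := by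
  have h := hbs y
  rw [← EReal.coe_toReal (ne_top_of_mem_subdiff hbs hy) (hbot a),
    ← EReal.coe_toReal hy (hbot y), ← EReal.coe_add, EReal.coe_le_coe_iff] at h
  linarith

theorem eventually_subdiff_apply_sub_lt [CompleteSpace X] (hbot : ∀ y, f y ≠ ⊥)
    (hconv : EConvex f) (hlsc : LowerSemicontinuous f) {x : X} (hx : x ∈ interior (fdom f))
    {ε : ℝ} (hε : 0 < ε) : ∀ᶠ a in 𝓝 x, ∀ bs ∈ subdiff f a, bs (a - x) < ε := by
  have hg := continuousAt_toReal_of_mem_interior_fdom hbot hconv hlsc hx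
  have hreflect : Tendsto (fun a : X => (2 : ℝ) • a - x) (𝓝 x) (𝓝 x) := by
    have h : Continuous fun a : X => (2 : ℝ) • a - x := by fun_prop
    simpa [two_smul] using h.tendsto x
  have hlim : Tendsto (fun a => (f ((2 : ℝ) • a - x)).toReal - (f a).toReal) (𝓝 x) (𝓝 0) := by
    simpa using (hg.tendsto.comp hreflect).sub hg.tendsto
  filter_upwards [hlim.eventually (gt_mem_nhds hε),
    hreflect.eventually (isOpen_interior.mem_nhds hx)] with a hlt hmem bs hbs
  calc bs (a - x) = bs (((2 : ℝ) • a - x) - a) := by congr 1; module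
    _ ≤ (f ((2 : ℝ) • a - x)).toReal - (f a).toReal :=
      subdiff_apply_sub_le hbot hbs (interior_subset hmem)
    _ < ε := hlt

end ConvexFunction

theorem le_fitz_of_mem_gra (B : X → Set (StrongDual ℝ X)) (p : X × StrongDual ℝ X)
    {q : X × StrongDual ℝ X} (hq : q ∈ gra B) :
    ((p.2 q.1 + q.2 p.1 - q.2 q.1 : ℝ) : EReal) ≤ fitz B p :=
  le_iSup₂ (f := fun q (_ : q ∈ gra B) => ((p.2 q.1 + q.2 p.1 - q.2 q.1 : ℝ) : EReal)) q hq

section MonotoneOperator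

variable {A : X → Set (StrongDual ℝ X)}

theorem IsMaxMonotoneOp.mem_gra_of_monRel (hA : IsMaxMonotoneOp A) {p : X × StrongDual ℝ X}
    (hp : MonRel p (gra A)) : p ∈ gra A := by
  obtain ⟨x, xs⟩ := p
  let B : X → Set (StrongDual ℝ X) := fun y => A y ∪ {ys | y = x ∧ ys = xs}
  have hB : IsMonotoneOp B := by
    rintro ⟨a, as⟩ (ha | ⟨rfl, rfl⟩) ⟨b, bs⟩ (hb | ⟨rfl, rfl⟩)
    · exact hA.1 _ ha _ hb
    · simpa only [← neg_sub b, ← neg_sub bs, map_neg, neg_apply, neg_neg] using hp _ ha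
    · exact hp _ hb
    · simp
  rw [← hA.2 B hB fun _ hq => Or.inl hq]
  exact Or.inr ⟨rfl, rfl⟩

theorem IsLinearRelation.smul_mem (hlin : IsLinearRelation A) (c : ℝ) {a : X}
    {as : StrongDual ℝ X} (has : as ∈ A a) : c • as ∈ A (c • a) := by
  obtain ⟨S, hS⟩ := hlin
  have hmem : c • (a, as) ∈ (S : Set (X × StrongDual ℝ X)) :=
    S.smul_mem c (by rw [← SetLike.mem_coe, hS]; exact has)
  rw [hS] at hmem
  exact hmem

theorem IsLinearRelation.add_mem (hlin : IsLinearRelation A) {a b : X} {as bs : StrongDual ℝ X}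
    (has : as ∈ A a) (hbs : bs ∈ A b) : as + bs ∈ A (a + b) := by
  obtain ⟨S, hS⟩ := hlin
  have hmem : (a, as) + (b, bs) ∈ (S : Set (X × StrongDual ℝ X)) :=
    S.add_mem (by rw [← SetLike.mem_coe, hS]; exact has) (by rw [← SetLike.mem_coe, hS]; exact hbs)
  rw [hS] at hmem
  exact hmem

theorem IsLinearRelation.zero_mem (hlin : IsLinearRelation A) : (0 : StrongDual ℝ X) ∈ A 0 := by
  obtain ⟨S, hS⟩ := hlin
  have hmem : (0 : X × StrongDual ℝ X) ∈ (S : Set (X × StrongDual ℝ X)) := S.zero_mem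
  rw [hS] at hmem
  exact hmem

theorem IsLinearRelation.map_eq_zero_of_mem_closure_domOp (hlin : IsLinearRelation A)
    (w : StrongDual ℝ X) {u : ℝ} (hw : ∀ a ∈ domOp A, w a < u) {x : X}
    (hx : x ∈ closure (domOp A)) : w x = 0 := by
  refine closure_minimal (fun a ha => ?_) (isClosed_eq w.continuous continuous_const) hx
  obtain ⟨as, has⟩ := ha
  by_contra hne
  have h := hw _ ⟨_, hlin.smul_mem ((|u| + 1) / w a) has⟩
  rw [map_smul, smul_eq_mul, div_mul_cancel₀ _ hne] at h
  linarith [le_abs_self u]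

def pairingEpigraph (A : X → Set (StrongDual ℝ X)) (x : X) : Set (X × ℝ) :=
  {p | ∃ as ∈ A p.1, as (p.1 - x) ≤ p.2}

theorem IsLinearRelation.convex_pairingEpigraph (hlin : IsLinearRelation A)
    (hmono : IsMonotoneOp A) (x : X) : Convex ℝ (pairingEpigraph A x) := by
  rintro ⟨a, t⟩ ⟨as, has, hat⟩ ⟨b, t'⟩ ⟨bs, hbs, hbt⟩ l m hl hm hlm
  refine ⟨l • as + m • bs, hlin.add_mem (hlin.smul_mem l has) (hlin.smul_mem m hbs), ?_⟩
  obtain rfl : m = 1 - l := by linarith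
  have hab : 0 ≤ (as - bs) (a - b) := hmono (a, as) has (b, bs) hbs
  have hexpand : (l • as + (1 - l) • bs) ((l • a + (1 - l) • b) - x)
      = l * as (a - x) + (1 - l) * bs (b - x) - l * (1 - l) * (as - bs) (a - b) := by
    simp only [add_apply, smul_apply, sub_apply, map_sub, map_add, map_smul, smul_eq_mul]
    ring
  change (l • as + (1 - l) • bs) ((l • a + (1 - l) • b) - x) ≤ l * t + (1 - l) * t'
  rw [hexpand]
  linarith [mul_le_mul_of_nonneg_left hat hl, mul_le_mul_of_nonneg_left hbt hm,
    mul_nonneg (mul_nonneg hl hm) hab]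

theorem monRel_inv_smul_of_separation {w : StrongDual ℝ X} {x : X} {s u : ℝ} (hs : s < 0)
    (hsep : ∀ a, ∀ as ∈ A a, w a + as (a - x) * s < u) (hwx : u < w x) :
    MonRel (x, (-s)⁻¹ • w) (gra A) := by
  rintro ⟨a, as⟩ has
  have h := hsep a as has
  have hexp : ((-s)⁻¹ • w - as) (x - a) = (-s)⁻¹ * (w x - (w a + as (a - x) * s)) := by
    simp only [sub_apply, smul_apply, map_sub, smul_eq_mul]
    field_simp [hs.ne]
    ring
  change 0 ≤ ((-s)⁻¹ • w - as) (x - a)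
  rw [hexp]
  exact mul_nonneg (inv_nonneg.2 (neg_nonneg.2 hs.le)) (by linarith)

theorem IsMaxMonotoneOp.mem_closure_pairingEpigraph (hA : IsMaxMonotoneOp A)
    (hlin : IsLinearRelation A) {x : X} (hx : x ∈ closure (domOp A)) :
    (x, (0 : ℝ)) ∈ closure (pairingEpigraph A x) := by
  by_contra hnot
  obtain ⟨G, u, hGC, hGx⟩ := geometric_hahn_banach_closed_point
    (hlin.convex_pairingEpigraph hA.1 x).closure isClosed_closure hnot
  set w : StrongDual ℝ X := G.comp (ContinuousLinearMap.inl ℝ X ℝ)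
  set s := G (0, 1)
  have hG : ∀ a t, G (a, t) = w a + t * s := fun a t => by
    have hsplit : (a, t) = (a, (0 : ℝ)) + t • ((0 : X), (1 : ℝ)) := by simp
    rw [hsplit, map_add, map_smul, smul_eq_mul]
    rfl
  have hC : ∀ a t, (∃ as ∈ A a, as (a - x) ≤ t) → w a + t * s < u := fun a t hat =>
    hG a t ▸ hGC _ (subset_closure hat)
  have hsep : ∀ a, ∀ as ∈ A a, w a + as (a - x) * s < u := fun a as has =>
    hC a _ ⟨as, has, le_rfl⟩
  have hwx : u < w x := by simpa [hG] using hGx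
  have hs : s ≤ 0 := by
    by_contra! hs
    have h := hC 0 ((|u| + 1) / s) ⟨0, hlin.zero_mem, by rw [zero_apply]; positivity⟩
    rw [map_zero, zero_add, div_mul_cancel₀ _ hs.ne'] at h
    linarith [le_abs_self u]
  rcases hs.lt_or_eq with hs | hs
  · have hxA := hA.mem_gra_of_monRel (monRel_inv_smul_of_separation hs hsep hwx)
    have h := hsep x _ hxA
    simp only [sub_self, map_zero, zero_mul, add_zero] at h
    linarith
  · have hw0 := hlin.map_eq_zero_of_mem_closure_domOp w
      (fun a ⟨as, has⟩ => by simpa [hs] using hsep a as has) hx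
    have h0 := hsep 0 0 hlin.zero_mem
    simp only [map_zero, zero_apply, zero_mul, add_zero] at h0
    linarith

end MonotoneOperator

/-- If `A` is a maximally monotone linear relation, `f` is proper lsc convex,
`x ∈ closure (dom A)` and `x ∈ int dom ∂f`, then the Fitzpatrick function of
`A + ∂f` dominates the duality pairing at `(x, x*)` for every `x*`. -/
theorem fitz_ge_pairing_of_mem_closure_dom
    {X : Type*} [NormedAddCommGroup X] [NormedSpace ℝ X] [CompleteSpace X]
    (A : X → Set (StrongDual ℝ X)) (hA : IsMaxMonotoneOp A) (hAlin : IsLinearRelation A)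
    (f : X → EReal) (hproper : EProper f) (hconv : EConvex f)
    (hlsc : LowerSemicontinuous f)
    (x : X) (hx₁ : x ∈ closure (domOp A)) (hx₂ : x ∈ interior (domOp (subdiff f))) :
    ∀ xs : StrongDual ℝ X, ((xs x : ℝ) : EReal) ≤ fitz (opSum A (subdiff f)) (x, xs) := by
  intro xs
  by_contra! hlt
  obtain ⟨c, hFc, hcx⟩ := EReal.lt_iff_exists_real_btwn.1 hlt
  obtain ⟨δ, hδ, rfl⟩ : ∃ δ > 0, c = xs x - δ :=
    ⟨xs x - c, sub_pos.2 (EReal.coe_lt_coe_iff.1 hcx), by ring⟩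
  have hgap : ∀ a, ∀ as ∈ A a, ∀ bs ∈ subdiff f a, xs a + (as + bs) x - (as + bs) a ≤ xs x - δ :=
    fun a as has bs hbs => EReal.coe_le_coe_iff.1 <|
      (le_fitz_of_mem_gra (opSum A (subdiff f)) (x, xs) (q := (a, as + bs))
        (Set.add_mem_add has hbs)).trans hFc.le
  have hdom : ∀ᶠ a in 𝓝 x, a ∈ domOp (subdiff f) := mem_interior_iff_mem_nhds.1 hx₂
  have hsub := eventually_subdiff_apply_sub_lt hproper.2 hconv hlsc
    (interior_mono (domOp_subdiff_subset_fdom hproper.1) hx₂) (div_pos hδ four_pos)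
  have hxs : ∀ᶠ a in 𝓝 x, -(δ / 4) < xs (a - x) :=
    (xs.continuous.comp (continuous_sub_right x)).continuousAt.eventually
      (lt_mem_nhds (by simpa using hδ))
  obtain ⟨⟨a, t⟩, ⟨⟨⟨bs, hbs⟩, ha_sub, ha_xs⟩, ht⟩, as, has, hat⟩ :=
    mem_closure_iff_nhds.1 (hA.mem_closure_pairingEpigraph hAlin hx₁) _
      (prod_mem_nhds (hdom.and (hsub.and hxs)) (Iio_mem_nhds (half_pos hδ)))
  have h := hgap a as has bs hbs
  have hbs' := ha_sub bs hbs
  simp only [map_sub, add_apply] at h hbs' ha_xs hat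
  simp only [mem_Iio] at ht
  linarith
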